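/- arXiv:1507.05879 — 3 statements merged into one kernel-verified Lean document; each statement's English description precedes it below -/
import Mathlib

section
/- Let a, c be complex numbers with c not a nonpositive integer, and let x, y be complex numbers with |x| + |y| < 1/4. Then ∑_{m,n ≥ 0} (a)_{2m+2n} x^m y^n / ((c)_{m+n} m! n!) = F(a/2, (a+1)/2; c; 4(x+y)). -/
noncomputable def poch (a : ℂ) : ℕ → ℂ
  | 0 => 1
  | n + 1 => poch a n * (a + n)

noncomputable def hyp (α β γ z : ℂ) : ℂ :=
  ∑' n : ℕ, poch α n * poch β n / (poch γ n * (Nat.factorial n : ℂ)) * z ^ n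

/-!
Legendre's duplication formula `(a)_{2N} = 4^N (a/2)_N ((a+1)/2)_N` makes the summand depend on
`(m, n)` only through `N = m + n` apart from the factor `x^m y^n / (m! n!)`, and the binomial
theorem sums these factors along the diagonal `m + n = N` to `(x + y)^N / N!`. So the diagonal sums
are the terms of `F(a/2, (a+1)/2; c; 4(x+y))`. The same computation with `‖x‖, ‖y‖` turns the
diagonal sums of norms into the norms of the terms of that series at `4(‖x‖ + ‖y‖) < 1`, inside
its radius of convergence, so the double series converges absolutely and may be summed diagonally.
-/

open Finset Nat

theorem hasSum_of_hasSum_sum_antidiagonal {A E : Type*} [AddCommMonoid A] [HasAntidiagonal A]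
    [NormedAddCommGroup E] [CompleteSpace E] {f : A × A → E} {s : E}
    (hnorm : Summable fun n ↦ ∑ kl ∈ antidiagonal n, ‖f kl‖)
    (hs : HasSum (fun n ↦ ∑ kl ∈ antidiagonal n, f kl) s) : HasSum f s := by
  have hsigma : Summable fun p : Σ n, antidiagonal n ↦ ‖f p.2.1‖ := by
    refine (summable_sigma_of_nonneg fun _ ↦ norm_nonneg _).2 ⟨fun _ ↦ .of_finite, ?_⟩
    convert hnorm using 2 with n
    exact Finset.tsum_subtype (antidiagonal n) (fun kl ↦ ‖f kl‖)
  rw [← HasAntidiagonal.sigmaAntidiagonalEquivProd.hasSum_iff]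
  refine HasSum.sigma_of_hasSum hs (fun n ↦ ?_) hsigma.of_norm
  exact (antidiagonal n).hasSum f

theorem sum_antidiagonal_pow_div_factorial {K : Type*} [Field K] [CharZero K] (x y : K) (n : ℕ) :
    ∑ kl ∈ antidiagonal n, x ^ kl.1 * y ^ kl.2 / (kl.1 ! * kl.2 !) = (x + y) ^ n / n ! := by
  rw [(Commute.all x y).add_pow', sum_div]
  refine sum_congr rfl fun kl hkl ↦ ?_
  rw [HasAntidiagonal.mem_antidiagonal] at hkl
  subst hkl
  have : ((kl.1 + kl.2)! : K) ≠ 0 := Nat.cast_ne_zero.2 (factorial_ne_zero _)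
  rw [nsmul_eq_mul, cast_add_choose]
  field_simp

theorem poch_eq_ascPochhammer_eval (a : ℂ) (n : ℕ) : poch a n = (ascPochhammer ℂ n).eval a := by
  induction n with
  | zero => simp [poch]
  | succ n ih => rw [poch, ih, ascPochhammer_succ_eval]

theorem poch_two_mul (a : ℂ) (n : ℕ) :
    poch a (2 * n) = 4 ^ n * poch (a / 2) n * poch ((a + 1) / 2) n := by
  induction n with
  | zero => simp [poch]
  | succ n ih =>
    rw [show 2 * (n + 1) = 2 * n + 1 + 1 by ring, poch, poch, poch, poch, ih]
    push_cast
    ring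

/-- A nonpositive integer parameter makes the series terminate (for `c` through `0⁻¹ = 0`). -/
theorem one_le_radius_ordinaryHypergeometricSeries {𝕂 : Type*} (𝔸 : Type*) [RCLike 𝕂]
    [NormedDivisionRing 𝔸] [NormedAlgebra 𝕂 𝔸] (a b c : 𝕂) :
    1 ≤ (ordinaryHypergeometricSeries 𝔸 a b c).radius := by
  by_cases habc : ∀ k : ℕ, (k : 𝕂) ≠ -a ∧ (k : 𝕂) ≠ -b ∧ (k : 𝕂) ≠ -c
  · rw [ordinaryHypergeometricSeries_radius_eq_one 𝔸 a b c habc]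
  obtain ⟨k, hk⟩ := not_forall.1 habc
  simp only [not_and_or, not_not] at hk
  rcases hk with hk | hk | hk <;> rw [neg_eq_iff_eq_neg.1 hk.symm]
  · simp [ordinaryHypergeometric_radius_top_of_neg_nat₁]
  · simp [ordinaryHypergeometric_radius_top_of_neg_nat₂]
  · simp [ordinaryHypergeometric_radius_top_of_neg_nat₃]

theorem summable_norm_hyp_term (α β γ z : ℂ) (hz : ‖z‖ < 1) :
    Summable fun n ↦ ‖poch α n * poch β n / (poch γ n * n !) * z ^ n‖ := by
  have hz' : z ∈ Metric.eball (0 : ℂ) (ordinaryHypergeometricSeries ℂ α β γ).radius := by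
    refine mem_eball_zero_iff.2 (lt_of_lt_of_le ?_ (one_le_radius_ordinaryHypergeometricSeries ..))
    simpa [enorm_eq_nnnorm, ← NNReal.coe_lt_one] using hz
  convert (ordinaryHypergeometricSeries ℂ α β γ).summable_norm_apply hz' using 2 with n
  rw [ordinaryHypergeometricSeries_apply_eq, smul_eq_mul]
  simp only [poch_eq_ascPochhammer_eval]
  ring_nf

noncomputable def twoVarTerm (a c x y : ℂ) (kl : ℕ × ℕ) : ℂ :=
  poch a (2 * kl.1 + 2 * kl.2) * x ^ kl.1 * y ^ kl.2 / (poch c (kl.1 + kl.2) * kl.1 ! * kl.2 !)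

theorem twoVarTerm_eq (a c x y : ℂ) (kl : ℕ × ℕ) :
    twoVarTerm a c x y kl =
      4 ^ (kl.1 + kl.2) * poch (a / 2) (kl.1 + kl.2) * poch ((a + 1) / 2) (kl.1 + kl.2) /
        poch c (kl.1 + kl.2) * (x ^ kl.1 * y ^ kl.2 / (kl.1 ! * kl.2 !)) := by
  rw [twoVarTerm, ← mul_add, poch_two_mul]
  ring

theorem sum_antidiagonal_twoVarTerm (a c x y : ℂ) (n : ℕ) :
    ∑ kl ∈ antidiagonal n, twoVarTerm a c x y kl =
      poch (a / 2) n * poch ((a + 1) / 2) n / (poch c n * n !) * (4 * (x + y)) ^ n := by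
  rw [sum_congr rfl fun kl hkl ↦ by rw [twoVarTerm_eq, HasAntidiagonal.mem_antidiagonal.1 hkl],
    ← mul_sum, sum_antidiagonal_pow_div_factorial, mul_pow]
  ring

theorem sum_antidiagonal_norm_twoVarTerm (a c x y : ℂ) (n : ℕ) :
    ∑ kl ∈ antidiagonal n, ‖twoVarTerm a c x y kl‖ =
      ‖poch (a / 2) n * poch ((a + 1) / 2) n / (poch c n * n !) *
        (4 * ((‖x‖ + ‖y‖ : ℝ) : ℂ)) ^ n‖ := by
  have hterm (kl : ℕ × ℕ) (hkl : kl ∈ antidiagonal n) : ‖twoVarTerm a c x y kl‖ =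
      ‖4 ^ n * poch (a / 2) n * poch ((a + 1) / 2) n / poch c n‖ *
        (‖x‖ ^ kl.1 * ‖y‖ ^ kl.2 / (kl.1 ! * kl.2 !)) := by
    rw [twoVarTerm_eq, HasAntidiagonal.mem_antidiagonal.1 hkl]
    simp
  rw [sum_congr rfl hterm, ← mul_sum, sum_antidiagonal_pow_div_factorial, norm_mul (_ / _),
    norm_pow, norm_mul, Complex.norm_real, Real.norm_of_nonneg (by positivity), mul_pow]
  simp only [norm_mul, norm_div, norm_pow, RCLike.norm_ofNat, Complex.norm_natCast]
  ring

theorem two_var_case_general (a c : ℂ) (x y : ℂ)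
    (hxy : ‖x‖ + ‖y‖ < 1 / 4) :
    HasSum
      (fun mn : ℕ × ℕ =>
        poch a (2 * mn.1 + 2 * mn.2) * x ^ mn.1 * y ^ mn.2 /
          (poch c (mn.1 + mn.2) * (Nat.factorial mn.1 : ℂ) * (Nat.factorial mn.2 : ℂ)))
      (hyp (a / 2) ((a + 1) / 2) c (4 * (x + y))) := by
  have hz : ‖4 * (x + y)‖ < 1 := by
    rw [norm_mul, RCLike.norm_ofNat]
    linarith [norm_add_le x y]
  have hr : ‖4 * ((‖x‖ + ‖y‖ : ℝ) : ℂ)‖ < 1 := by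
    rw [norm_mul, RCLike.norm_ofNat, Complex.norm_real, Real.norm_of_nonneg (by positivity)]
    linarith
  refine hasSum_of_hasSum_sum_antidiagonal (f := twoVarTerm a c x y) ?_ ?_
  · simpa only [sum_antidiagonal_norm_twoVarTerm] using summable_norm_hyp_term _ _ _ _ hr
  · simpa only [sum_antidiagonal_twoVarTerm, hyp] using
      (summable_norm_hyp_term _ _ _ _ hz).of_norm.hasSum

theorem two_var_case (a c : ℂ) (hc : ∀ n : ℕ, c ≠ -(n : ℂ)) (x y : ℂ)
    (hxy : ‖x‖ + ‖y‖ < 1 / 4) :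
    HasSum
      (fun mn : ℕ × ℕ =>
        poch a (2 * mn.1 + 2 * mn.2) * x ^ mn.1 * y ^ mn.2 /
          (poch c (mn.1 + mn.2) * (Nat.factorial mn.1 : ℂ) * (Nat.factorial mn.2 : ℂ)))
      (hyp (a / 2) ((a + 1) / 2) c (4 * (x + y))) :=
  two_var_case_general a c x y hxy
end

section
/- For real a > 0 and complex z with 0 < |z| < 1 (principal branches used), the Gauss hypergeometric function satisfies F((a+1)/2, (a+2)/2; a; z) = 2^{a−1} ((a−2)(√(1−z) − 1) + (a−1)z) / (a z (1−z)^{3/2} (√(1−z)+1)^{a−2}). -/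
open Complex Metric Topology

def SolvesHypergeometricOn (α β γ : ℂ) (f : ℂ → ℂ) (s : Set ℂ) : Prop :=
  ∀ w ∈ s,
    w * (1 - w) * deriv (deriv f) w + (γ - (α + β + 1) * w) * deriv f w - α * β * f w = 0

section Hypergeometric

variable {α β γ : ℂ} {f : ℂ → ℂ} {s : Set ℂ}

theorem SolvesHypergeometricOn.of_hasDerivAt (hs : IsOpen s) {f' f'' : ℂ → ℂ}
    (hf : ∀ w ∈ s, HasDerivAt f (f' w) w) (hf' : ∀ w ∈ s, HasDerivAt f' (f'' w) w)
    (hode : ∀ w ∈ s,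
      w * (1 - w) * f'' w + (γ - (α + β + 1) * w) * f' w - α * β * f w = 0) :
    SolvesHypergeometricOn α β γ f s := by
  intro w hw
  have hderiv : deriv f =ᶠ[𝓝 w] f' := by
    filter_upwards [hs.mem_nhds hw] with x hx using (hf x hx).deriv
  rw [hderiv.deriv_eq, (hf' w hw).deriv, (hf w hw).deriv]
  exact hode w hw

theorem SolvesHypergeometricOn.deriv (hs : IsOpen s) (hf : AnalyticOnNhd ℂ f s)
    (h : SolvesHypergeometricOn α β γ f s) :
    SolvesHypergeometricOn (α + 1) (β + 1) (γ + 1) (deriv f) s := by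
  intro w hw
  have hd : ∀ g : ℂ → ℂ, AnalyticOnNhd ℂ g s → HasDerivAt g (_root_.deriv g w) w :=
    fun g hg => (hg w hw).differentiableAt.hasDerivAt
  -- The left-hand side vanishes near `w`; its derivative is the shifted equation.
  have hE := ((((hasDerivAt_id' w).fun_mul ((hasDerivAt_id' w).const_sub 1)).fun_mul
      (hd _ hf.deriv.deriv)).fun_add
    ((((hasDerivAt_id' w).const_mul (α + β + 1)).const_sub γ).fun_mul (hd _ hf.deriv))).fun_sub
    ((hd _ hf).const_mul (α * β))
  have hzero : (fun x => x * (1 - x) * _root_.deriv (_root_.deriv f) x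
      + (γ - (α + β + 1) * x) * _root_.deriv f x - α * β * f x) =ᶠ[𝓝 w] fun _ => 0 := by
    filter_upwards [hs.mem_nhds hw] with x hx using h x hx
  have hE0 := hE.deriv
  rw [hzero.deriv_eq, deriv_const] at hE0
  linear_combination -hE0

theorem SolvesHypergeometricOn.iteratedDeriv (hs : IsOpen s) (hf : AnalyticOnNhd ℂ f s)
    (h : SolvesHypergeometricOn α β γ f s) (n : ℕ) :
    SolvesHypergeometricOn (α + n) (β + n) (γ + n) (_root_.iteratedDeriv n f) s := by
  induction n with
  | zero => simpa using h
  | succ n ih =>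
    have hfn : AnalyticOnNhd ℂ (_root_.iteratedDeriv n f) s := by
      rw [iteratedDeriv_eq_iterate]; exact hf.iterated_deriv n
    rw [iteratedDeriv_succ]
    push_cast
    simpa only [add_assoc] using ih.deriv hs hfn

theorem iteratedDeriv_at_zero_of_solvesHypergeometricOn (hγ : ∀ n : ℕ, γ + n ≠ 0)
    (h : SolvesHypergeometricOn α β γ f s)
    (hs : IsOpen s) (h0s : (0 : ℂ) ∈ s) (hf : AnalyticOnNhd ℂ f s) (hf0 : f 0 = 1) (n : ℕ) :
    iteratedDeriv n f 0 = poch α n * poch β n / poch γ n := by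
  induction n with
  | zero => simp [poch, hf0]
  | succ n ih =>
    have hrec := h.iteratedDeriv hs hf n 0 h0s
    rw [← iteratedDeriv_succ, ← iteratedDeriv_succ, ih] at hrec
    show iteratedDeriv (n + 1) f 0
      = poch α n * (α + n) * (poch β n * (β + n)) / (poch γ n * (γ + n))
    rw [← div_div, eq_div_iff (hγ n)]
    linear_combination hrec

theorem hyp_eq_of_solvesHypergeometricOn (hγ : ∀ n : ℕ, γ + n ≠ 0) {r : ℝ}
    (hf : DifferentiableOn ℂ f (ball 0 r)) (h : SolvesHypergeometricOn α β γ f (ball 0 r))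
    (hf0 : f 0 = 1) {z : ℂ} (hz : z ∈ ball 0 r) : hyp α β γ z = f z := by
  have hfa : AnalyticOnNhd ℂ f (ball 0 r) := hf.analyticOnNhd isOpen_ball
  have h0 : (0 : ℂ) ∈ ball 0 r := mem_ball_self (pos_of_mem_ball hz)
  rw [← taylorSeries_eq_on_ball' hz hf, hyp]
  congr 1 with n
  rw [iteratedDeriv_at_zero_of_solvesHypergeometricOn hγ h isOpen_ball h0 hfa hf0, sub_zero]
  field_simp

end Hypergeometric

theorem one_add_cpow_one_div_two_mem_slitPlane (x : ℂ) : 1 + x ^ (1 / 2 : ℂ) ∈ slitPlane := by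
  left
  rw [add_re, one_re, one_div, cpow_inv_two_re]
  positivity

theorem cpow_one_div_two_sq (x : ℂ) : (x ^ (1 / 2 : ℂ)) ^ 2 = x := by
  rw [one_div]
  exact cpow_ofNat_inv_pow x 2

theorem one_sub_mem_slitPlane {z : ℂ} (hz : z ∈ ball (0 : ℂ) 1) : 1 - z ∈ slitPlane := by
  left
  have := (re_le_norm z).trans_lt (mem_ball_zero_iff.mp hz)
  simp only [sub_re, one_re]
  linarith

theorem cpow_one_div_two_ne_zero {z : ℂ} (hz : 1 - z ∈ slitPlane) : (1 - z) ^ (1 / 2 : ℂ) ≠ 0 := by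
  simp [cpow_eq_zero_iff, slitPlane_ne_zero hz]

theorem hasDerivAt_comp_cpow_one_div_two {h : ℂ → ℂ} {h' z : ℂ} (hz : 1 - z ∈ slitPlane)
    (hh : HasDerivAt h (-2 * (1 - z) ^ (1 / 2 : ℂ) * h') ((1 - z) ^ (1 / 2 : ℂ))) :
    HasDerivAt (fun w => h ((1 - w) ^ (1 / 2 : ℂ))) h' z := by
  have hsqrt := ((hasDerivAt_id' z).const_sub 1).cpow_const (c := 1 / 2) hz
  refine (hh.comp z hsqrt).congr_deriv ?_
  have h0 : 1 - z ≠ 0 := slitPlane_ne_zero hz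
  rw [cpow_sub _ _ h0, cpow_one]
  field_simp
  rw [cpow_one_div_two_sq]

theorem hasDerivAt_one_add_cpow_mul (a : ℂ) {R : ℂ → ℂ} {R' u : ℂ}
    (hu : 1 + u ∈ slitPlane) (hR : HasDerivAt R R' u) :
    HasDerivAt (fun v => (1 + v) ^ (1 - a) * R v)
      ((1 + u) ^ (1 - a) * ((1 - a) * R u / (1 + u) + R')) u := by
  have hpow := ((hasDerivAt_id' u).const_add 1).cpow_const (c := 1 - a) hu
  refine (hpow.mul hR).congr_deriv ?_
  rw [cpow_sub _ _ (slitPlane_ne_zero hu), cpow_one]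
  ring

/-- `2^(a-1)/a · closedFormₖ a √(1-z)` is the `k`-th derivative in `z` of the right-hand side. -/
noncomputable def closedForm₀ (a u : ℂ) : ℂ :=
  (1 + u) ^ (1 - a) * ((1 + (a - 1) * u) / u ^ 3)

noncomputable def closedForm₁ (a u : ℂ) : ℂ :=
  (1 + u) ^ (1 - a) * (((a ^ 2 - 1) * u ^ 2 + 3 * a * u + 3) / (2 * u ^ 5 * (1 + u)))

noncomputable def closedForm₂ (a u : ℂ) : ℂ :=
  (1 + u) ^ (1 - a) *
    (((a ^ 2 - 1) * (a + 3) * u ^ 3 + 3 * (2 * a ^ 2 + 4 * a - 1) * u ^ 2 + 15 * (a + 1) * u + 15)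
      / (4 * u ^ 7 * (1 + u) ^ 2))

section ClosedForm

variable (a : ℂ) {u : ℂ}

theorem hasDerivAt_closedForm₀ (hu : u ≠ 0) (hu1 : 1 + u ∈ slitPlane) :
    HasDerivAt (closedForm₀ a) (-2 * u * closedForm₁ a u) u := by
  have hR := (((hasDerivAt_id' u).const_mul (a - 1)).const_add 1).fun_div (hasDerivAt_pow 3 u)
    (pow_ne_zero 3 hu)
  refine (hasDerivAt_one_add_cpow_mul a hu1 hR).congr_deriv ?_
  have h1 : 1 + u ≠ 0 := slitPlane_ne_zero hu1
  rw [closedForm₁]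
  field_simp
  ring

theorem hasDerivAt_closedForm₁ (hu : u ≠ 0) (hu1 : 1 + u ∈ slitPlane) :
    HasDerivAt (closedForm₁ a) (-2 * u * closedForm₂ a u) u := by
  have hR := (((((hasDerivAt_id' u).fun_pow 2).const_mul (a ^ 2 - 1)).fun_add
    ((hasDerivAt_id' u).const_mul (3 * a))).add_const 3).fun_div
    (((hasDerivAt_pow 5 u).const_mul 2).fun_mul ((hasDerivAt_id' u).const_add 1))
    (by simp [hu, slitPlane_ne_zero hu1])
  refine (hasDerivAt_one_add_cpow_mul a hu1 hR).congr_deriv ?_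
  have h1 : 1 + u ≠ 0 := slitPlane_ne_zero hu1
  rw [closedForm₂]
  field_simp
  ring

theorem closedForm_ode (hu : u ≠ 0) (hu1 : 1 + u ≠ 0) :
    (1 - u ^ 2) * u ^ 2 * closedForm₂ a u
      + (a - (a + 5 / 2) * (1 - u ^ 2)) * closedForm₁ a u
      - (a + 1) * (a + 2) / 4 * closedForm₀ a u = 0 := by
  rw [closedForm₀, closedForm₁, closedForm₂]
  field_simp
  ring

end ClosedForm

section ClosedFormInZ

variable (a : ℂ) {z : ℂ}

theorem hasDerivAt_closedForm₀_comp (hz : 1 - z ∈ slitPlane) :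
    HasDerivAt (fun w => closedForm₀ a ((1 - w) ^ (1 / 2 : ℂ)))
      (closedForm₁ a ((1 - z) ^ (1 / 2 : ℂ))) z :=
  hasDerivAt_comp_cpow_one_div_two hz <|
    hasDerivAt_closedForm₀ a (cpow_one_div_two_ne_zero hz)
      (one_add_cpow_one_div_two_mem_slitPlane _)

theorem hasDerivAt_closedForm₁_comp (hz : 1 - z ∈ slitPlane) :
    HasDerivAt (fun w => closedForm₁ a ((1 - w) ^ (1 / 2 : ℂ)))
      (closedForm₂ a ((1 - z) ^ (1 / 2 : ℂ))) z :=
  hasDerivAt_comp_cpow_one_div_two hz <|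
    hasDerivAt_closedForm₁ a (cpow_one_div_two_ne_zero hz)
      (one_add_cpow_one_div_two_mem_slitPlane _)

theorem solvesHypergeometricOn_closedForm₀_comp (c : ℂ) :
    SolvesHypergeometricOn ((a + 1) / 2) ((a + 2) / 2) a
      (fun z => c * closedForm₀ a ((1 - z) ^ (1 / 2 : ℂ))) (ball 0 1) := by
  refine .of_hasDerivAt isOpen_ball
    (fun z hz => (hasDerivAt_closedForm₀_comp a (one_sub_mem_slitPlane hz)).const_mul c)
    (fun z hz => (hasDerivAt_closedForm₁_comp a (one_sub_mem_slitPlane hz)).const_mul c) ?_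
  intro z hz
  have hslit := one_sub_mem_slitPlane hz
  have hode := closedForm_ode a (cpow_one_div_two_ne_zero hslit)
    (slitPlane_ne_zero (one_add_cpow_one_div_two_mem_slitPlane _))
  rw [cpow_one_div_two_sq] at hode
  linear_combination c * hode

theorem differentiableOn_closedForm₀_comp (c : ℂ) :
    DifferentiableOn ℂ (fun z => c * closedForm₀ a ((1 - z) ^ (1 / 2 : ℂ))) (ball 0 1) :=
  fun _ hz => ((hasDerivAt_closedForm₀_comp a (one_sub_mem_slitPlane hz)).const_mul c)
    |>.differentiableAt.differentiableWithinAt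

theorem closedForm₀_one_normalized (ha : a ≠ 0) : 2 ^ (a - 1) / a * closedForm₀ a 1 = 1 := by
  have h2 : (2 : ℂ) ^ (a - 1) * 2 ^ (1 - a) = 1 := by
    rw [← cpow_add _ _ two_ne_zero, sub_add_sub_cancel', sub_self, cpow_zero]
  norm_num [closedForm₀]
  field_simp
  linear_combination h2

theorem closedForm₀_comp_eq (hz : 1 - z ∈ slitPlane) (hz0 : z ≠ 0) :
    2 ^ (a - 1) / a * closedForm₀ a ((1 - z) ^ (1 / 2 : ℂ)) =
      2 ^ (a - 1) * ((a - 2) * ((1 - z) ^ (1 / 2 : ℂ) - 1) + (a - 1) * z) /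
        (a * z * (1 - z) ^ (3 / 2 : ℂ) * ((1 - z) ^ (1 / 2 : ℂ) + 1) ^ (a - 2)) := by
  have hu0 := cpow_one_div_two_ne_zero hz
  have hu1 := slitPlane_ne_zero (one_add_cpow_one_div_two_mem_slitPlane (1 - z))
  have hsq := cpow_one_div_two_sq (1 - z)
  have hcube : (1 - z) ^ (3 / 2 : ℂ) = ((1 - z) ^ (1 / 2 : ℂ)) ^ 3 := by
    rw [show (3 / 2 : ℂ) = 1 / 2 + 1 by norm_num, cpow_add _ _ (slitPlane_ne_zero hz), cpow_one]
    linear_combination -(1 - z) ^ (1 / 2 : ℂ) * hsq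
  have hpow : (1 + (1 - z) ^ (1 / 2 : ℂ)) ^ (1 - a) * ((1 - z) ^ (1 / 2 : ℂ) + 1) ^ (a - 2)
      * (1 + (1 - z) ^ (1 / 2 : ℂ)) = 1 := by
    rw [add_comm _ (1 : ℂ), ← cpow_add _ _ hu1, show 1 - a + (a - 2) = (-1 : ℂ) by ring,
      cpow_neg_one, inv_mul_cancel₀ hu1]
  rw [closedForm₀, hcube]
  set u := (1 - z) ^ (1 / 2 : ℂ)
  have hV : (u + 1) ^ (a - 2) ≠ 0 :=
    right_ne_zero_of_mul (left_ne_zero_of_mul (hpow ▸ one_ne_zero))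
  field_simp
  congr 1
  linear_combination (1 + (a - 1) * u) * (1 - u) * hpow
    + ((1 + (a - 1) * u) * (1 + u) ^ (1 - a) * (u + 1) ^ (a - 2) - (a - 1)) * hsq

end ClosedFormInZ

theorem hyp_closed_form_a (a : ℝ) (ha : 0 < a) (z : ℂ) (hz : ‖z‖ < 1)
    (hz0 : z ≠ 0) :
    hyp (((a : ℂ) + 1) / 2) (((a : ℂ) + 2) / 2) (a : ℂ) z =
      (2 : ℂ) ^ ((a : ℂ) - 1) *
          (((a : ℂ) - 2) * ((1 - z) ^ ((1 : ℂ) / 2) - 1) + ((a : ℂ) - 1) * z) /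
        ((a : ℂ) * z * (1 - z) ^ ((3 : ℂ) / 2) *
          ((1 - z) ^ ((1 : ℂ) / 2) + 1) ^ ((a : ℂ) - 2)) := by
  have hγ : ∀ n : ℕ, (a : ℂ) + n ≠ 0 := fun n h => by
    have := congrArg re h
    simp only [add_re, ofReal_re, natCast_re, zero_re] at this
    linarith [n.cast_nonneg (α := ℝ)]
  have hzball : z ∈ ball (0 : ℂ) 1 := mem_ball_zero_iff.mpr hz
  have hf0 : 2 ^ ((a : ℂ) - 1) / a * closedForm₀ a ((1 - 0) ^ (1 / 2 : ℂ)) = 1 := by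
    simpa using closedForm₀_one_normalized a (ofReal_ne_zero.mpr ha.ne')
  rw [hyp_eq_of_solvesHypergeometricOn hγ (differentiableOn_closedForm₀_comp _ _)
    (solvesHypergeometricOn_closedForm₀_comp _ _) hf0 hzball]
  exact closedForm₀_comp_eq _ (one_sub_mem_slitPlane hzball) hz0
end

section
/- For complex x, y with |x/y| < 1, |y| < 1, y ≠ 0 and complex w with |w/y| < 1: ∑_{α_2 ≥ 0, α_3 ≥ 0, k ≥ 0} (α_3+1)(k + α_2 + α_3 + 3) Γ(k + α_2 + 2)/(Γ(α_2+1) Γ(k+1)) · y^{k−2} (x/y)^{α_2} (w/y)^{α_3} equals y^{−2} times [ (w/y + 1)/(1 − w/y)³ · 1/(1 − y − x/y)² + 1/(1 − w/y)² · 2/(1 − y − x/y)³ ] (assuming also |y| + |x/y| < 1). -/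
/-!
With `n = α₂ + k`, the Gamma quotient is `(n + 1) * choose n α₂`, and the weight
`(α₃ + 1) (k + α₂ + α₃ + 3)` splits as `(α₃ + 1)² + (α₃ + 1) (n + 2)`. So the series
is `y⁻²` times a sum of two products of a series in `w / y` with a double series in `(α₂, k)`,
and the binomial theorem collapses each double series along `α₂ + k = n` into a power series
in `x / y + y`. Everything converges absolutely because `‖y‖ + ‖x / y‖ < 1` and
`‖w / y‖ < 1`, which justifies the rearrangements.
-/

open Finset

section Geometric

variable {𝕜 : Type*} [NormedField 𝕜] {r : 𝕜}

theorem hasSum_add_one_mul_geometric_of_norm_lt_one (hr : ‖r‖ < 1) :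
    HasSum (fun n : ℕ => ((n + 1 : ℕ) : 𝕜) * r ^ n) (1 / (1 - r) ^ 2) := by
  simpa [Nat.choose_one_right] using hasSum_choose_mul_geometric_of_norm_lt_one 1 hr

theorem hasSum_add_one_mul_add_two_mul_geometric_of_norm_lt_one (hr : ‖r‖ < 1) :
    HasSum (fun n : ℕ => (((n + 1) * (n + 2) : ℕ) : 𝕜) * r ^ n) (2 / (1 - r) ^ 3) := by
  have h := (hasSum_choose_mul_geometric_of_norm_lt_one 2 hr).mul_left 2
  rw [show (2 : 𝕜) * (1 / (1 - r) ^ (2 + 1)) = 2 / (1 - r) ^ 3 by ring] at h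
  refine h.congr_fun fun n => ?_
  have hchoose : (n + 2) * (n + 1) = (n + 2).choose 2 * 2 := by
    simpa using Nat.add_one_mul_choose_eq (n + 1) 1
  rw [mul_comm (n + 1), hchoose]
  push_cast
  ring

theorem hasSum_add_one_sq_mul_geometric_of_norm_lt_one (hr : ‖r‖ < 1) :
    HasSum (fun n : ℕ => (((n + 1) ^ 2 : ℕ) : 𝕜) * r ^ n) ((1 + r) / (1 - r) ^ 3) := by
  have hr1 : 1 - r ≠ 0 := sub_ne_zero.2 (by rintro rfl; simp at hr)
  have h := (hasSum_add_one_mul_add_two_mul_geometric_of_norm_lt_one hr).sub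
    (hasSum_add_one_mul_geometric_of_norm_lt_one hr)
  rw [show 2 / (1 - r) ^ 3 - 1 / (1 - r) ^ 2 = (1 + r) / (1 - r) ^ 3 by
    field_simp; ring] at h
  refine h.congr_fun fun n => ?_
  push_cast
  ring

end Geometric

theorem summable_norm_natCast_mul_geometric {𝕜 : Type*} [RCLike 𝕜] {c : ℕ → ℕ} {r : 𝕜}
    (h : Summable fun n => (c n : ℝ) * ‖r‖ ^ n) :
    Summable fun n => ‖(c n : 𝕜) * r ^ n‖ := by
  simpa only [norm_mul, norm_pow, RCLike.norm_natCast] using h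

theorem sum_antidiagonal_mul_choose_mul_pow {R : Type*} [CommSemiring R] (c : ℕ → R) (n : ℕ)
    (u y : R) :
    ∑ p ∈ antidiagonal n, c (p.1 + p.2) * (p.1 + p.2).choose p.1 * u ^ p.1 * y ^ p.2 =
      c n * (u + y) ^ n := by
  rw [(Commute.all u y).add_pow', mul_sum]
  refine sum_congr rfl fun p hp => ?_
  rw [mem_antidiagonal.1 hp, nsmul_eq_mul]
  ring

theorem summable_iff_summable_sum_antidiagonal_of_nonneg {f : ℕ × ℕ → ℝ} (hf : 0 ≤ f) :
    Summable f ↔ Summable fun n => ∑ p ∈ antidiagonal n, f p := by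
  rw [← HasAntidiagonal.sigmaAntidiagonalEquivProd.summable_iff,
    summable_sigma_of_nonneg (f := f ∘ _) fun _ => hf _]
  simp only [Function.comp_apply, HasAntidiagonal.sigmaAntidiagonalEquivProd_apply,
    Summable.of_finite, implies_true, tsum_fintype, univ_eq_attach, sum_attach, true_and]

theorem Summable.hasSum_of_sum_antidiagonal {α : Type*} [AddCommMonoid α] [TopologicalSpace α]
    [ContinuousAdd α] [T3Space α] {f : ℕ × ℕ → α} {s : α}
    (hf : Summable f) (h : HasSum (fun n => ∑ p ∈ antidiagonal n, f p) s) : HasSum f s := by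
  obtain ⟨s', hs'⟩ := hf
  have := (HasAntidiagonal.sigmaAntidiagonalEquivProd.hasSum_iff.2 hs').sigma
    fun n => (antidiagonal n).hasSum f
  rwa [h.unique this]

section Binomial

variable {𝕜 : Type*} [RCLike 𝕜] {c : ℕ → ℕ} {u y : 𝕜}

theorem summable_norm_choose_mul_pow
    (hc : Summable fun n => (c n : ℝ) * (‖u‖ + ‖y‖) ^ n) :
    Summable fun p : ℕ × ℕ =>
      ‖(c (p.1 + p.2) : 𝕜) * (p.1 + p.2).choose p.1 * u ^ p.1 * y ^ p.2‖ := by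
  rw [summable_iff_summable_sum_antidiagonal_of_nonneg fun _ => norm_nonneg _]
  simp only [norm_mul, norm_pow, RCLike.norm_natCast]
  exact hc.congr fun n =>
    (sum_antidiagonal_mul_choose_mul_pow (fun n => (c n : ℝ)) n _ _).symm

theorem hasSum_choose_mul_pow
    (hc : Summable fun n => (c n : ℝ) * (‖u‖ + ‖y‖) ^ n) {t : 𝕜}
    (ht : HasSum (fun n => (c n : 𝕜) * (u + y) ^ n) t) :
    HasSum
      (fun p : ℕ × ℕ => (c (p.1 + p.2) : 𝕜) * (p.1 + p.2).choose p.1 * u ^ p.1 * y ^ p.2) t :=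
  (summable_norm_choose_mul_pow hc).of_norm.hasSum_of_sum_antidiagonal <|
    ht.congr_fun fun n => sum_antidiagonal_mul_choose_mul_pow (fun n => (c n : 𝕜)) n u y

theorem HasSum.mul_choose_mul_pow {f : ℕ → 𝕜} {s t : 𝕜} (hf : HasSum f s)
    (hf' : Summable fun n => ‖f n‖) (hc : Summable fun n => (c n : ℝ) * (‖u‖ + ‖y‖) ^ n)
    (ht : HasSum (fun n => (c n : 𝕜) * (u + y) ^ n) t) :
    HasSum (fun q : ℕ × ℕ × ℕ => f q.1 *
      ((c (q.2.1 + q.2.2) : 𝕜) * (q.2.1 + q.2.2).choose q.2.1 * u ^ q.2.1 * y ^ q.2.2))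
      (s * t) := by
  have hD := hasSum_choose_mul_pow hc ht
  have hprod := summable_mul_of_summable_norm hf' (summable_norm_choose_mul_pow hc)
  exact (hf.mul hD hprod :)

end Binomial

theorem Complex.Gamma_add_two_div_Gamma_mul_Gamma (a k : ℕ) :
    Gamma ((k : ℂ) + a + 2) / (Gamma ((a : ℂ) + 1) * Gamma ((k : ℂ) + 1)) =
      ((a + k + 1 : ℕ) : ℂ) * ((a + k).choose a : ℕ) := by
  rw [show (k : ℂ) + a + 2 = ((a + k + 1 : ℕ) : ℂ) + 1 by push_cast; ring,
    Gamma_nat_eq_factorial, Gamma_nat_eq_factorial, Gamma_nat_eq_factorial,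
    Nat.cast_add_choose, Nat.factorial_succ]
  push_cast
  field_simp

theorem D2_reindexed_series_general (x y w : ℂ) (hy0 : y ≠ 0)
    (hw : ‖w / y‖ < 1)
    (hsum : ‖y‖ + ‖x / y‖ < 1) :
    HasSum
      (fun t : ℕ × ℕ × ℕ =>
        ((t.2.1 : ℂ) + 1) * ((t.2.2 : ℂ) + t.1 + t.2.1 + 3) *
            Complex.Gamma ((t.2.2 : ℂ) + t.1 + 2) /
            (Complex.Gamma ((t.1 : ℂ) + 1) * Complex.Gamma ((t.2.2 : ℂ) + 1)) *
          y ^ ((t.2.2 : ℤ) - 2) * (x / y) ^ t.1 * (w / y) ^ t.2.1)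
      (y ^ (-2 : ℤ) *
        ((w / y + 1) / (1 - w / y) ^ 3 * (1 / (1 - y - x / y) ^ 2) +
          1 / (1 - w / y) ^ 2 * (2 / (1 - y - x / y) ^ 3))) := by
  set u := x / y
  set v := w / y
  have hv : ‖‖v‖‖ < 1 := by rwa [norm_norm]
  have huy : ‖u + y‖ < 1 := (norm_add_le u y).trans_lt (by linarith)
  have hnuy : ‖‖u‖ + ‖y‖‖ < 1 := by
    rw [Real.norm_of_nonneg (by positivity)]
    linarith
  have h₁ := (hasSum_add_one_sq_mul_geometric_of_norm_lt_one hw).mul_choose_mul_pow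
    (summable_norm_natCast_mul_geometric
      (hasSum_add_one_sq_mul_geometric_of_norm_lt_one hv).summable)
    (hasSum_add_one_mul_geometric_of_norm_lt_one hnuy).summable
    (hasSum_add_one_mul_geometric_of_norm_lt_one huy)
  have h₂ := (hasSum_add_one_mul_geometric_of_norm_lt_one hw).mul_choose_mul_pow
    (summable_norm_natCast_mul_geometric (hasSum_add_one_mul_geometric_of_norm_lt_one hv).summable)
    (hasSum_add_one_mul_add_two_mul_geometric_of_norm_lt_one hnuy).summable
    (hasSum_add_one_mul_add_two_mul_geometric_of_norm_lt_one huy)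
  let e : ℕ × ℕ × ℕ ≃ ℕ × ℕ × ℕ :=
    ⟨fun t => (t.2.1, t.1, t.2.2), fun t => (t.2.1, t.1, t.2.2), fun _ => rfl, fun _ => rfl⟩
  rw [show 1 - y - u = 1 - (u + y) by ring, add_comm v 1]
  refine ((e.hasSum_iff.2 (h₁.add h₂)).mul_left (y ^ (-2 : ℤ))).congr_fun
    fun ⟨a, b, k⟩ => ?_
  rw [mul_div_assoc, Complex.Gamma_add_two_div_Gamma_mul_Gamma, sub_eq_add_neg, zpow_add₀ hy0,
    zpow_natCast]
  simp only [e, Equiv.coe_fn_mk, Function.comp_apply]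
  push_cast
  ring

theorem D2_reindexed_series (x y w : ℂ) (hy0 : y ≠ 0)
    (hxy : ‖x / y‖ < 1) (hy : ‖y‖ < 1)
    (hw : ‖w / y‖ < 1)
    (hsum : ‖y‖ + ‖x / y‖ < 1) :
    HasSum
      (fun t : ℕ × ℕ × ℕ =>
        ((t.2.1 : ℂ) + 1) * ((t.2.2 : ℂ) + t.1 + t.2.1 + 3) *
            Complex.Gamma ((t.2.2 : ℂ) + t.1 + 2) /
            (Complex.Gamma ((t.1 : ℂ) + 1) * Complex.Gamma ((t.2.2 : ℂ) + 1)) *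
          y ^ ((t.2.2 : ℤ) - 2) * (x / y) ^ t.1 * (w / y) ^ t.2.1)
      (y ^ (-2 : ℤ) *
        ((w / y + 1) / (1 - w / y) ^ 3 * (1 / (1 - y - x / y) ^ 2) +
          1 / (1 - w / y) ^ 2 * (2 / (1 - y - x / y) ^ 3))) :=
  D2_reindexed_series_general x y w hy0 hw hsum
end
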